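/- arXiv:2404.17885 — 2 statements merged into one kernel-verified Lean document; each statement's English description precedes it below -/
import Mathlib

section
/- Let (ε_i)_{i∈ℤ} be i.i.d. random variables and α, β > 0 with E log(α ε₀² + β) < 0 and E(log(α ε₀² + β))⁺ < ∞. Then the random series h² = ω (1 + Σ_{j=1}^∞ Π_{k=1}^j (α ε_{-k}² + β)) converges almost surely for every ω > 0, and h² gives the unique strictly stationary solution of the recursion h²_i = ω + (α ε_{i-1}² + β) h²_{i-1}. -/
open MeasureTheory ProbabilityTheory Filter Topology

private lemma prodIccRange {M : Type*} [CommMonoid M] (f : ℕ → M) (m : ℕ) :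
    ∏ k ∈ Finset.Icc 1 m, f k = ∏ n ∈ Finset.range m, f (n+1) := by
  induction m with
  | zero => simp
  | succ m ih => rw [Finset.prod_Icc_succ_top (by omega), ih, Finset.prod_range_succ]

private lemma conv_of_slln (a : ℕ → ℝ) (ha : ∀ n, 0 < a n) (C m : ℝ) (hm : m < 0)
    (h : Tendsto (fun n : ℕ => (∑ k ∈ Finset.range n, max (Real.log (a k)) (-C)) / n)
      atTop (𝓝 m)) :
    Summable (fun j : ℕ => ∏ n ∈ Finset.range (j+1), a n) ∧
    Tendsto (fun N : ℕ => ∏ n ∈ Finset.range N, a n) atTop (𝓝 0) := by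
  set X : ℕ → ℝ := fun k => max (Real.log (a k)) (-C) with hX
  set r : ℝ := Real.exp (m/2) with hr
  have hr0 : 0 < r := Real.exp_pos _
  have hr1 : r < 1 := Real.exp_lt_one_iff.mpr (by linarith)
  have hev : ∀ᶠ n : ℕ in atTop, (∑ k ∈ Finset.range n, X k) / n < m/2 :=
    h.eventually (eventually_lt_nhds (by linarith))
  obtain ⟨N₀, hN₀⟩ := (hev.and (eventually_ge_atTop 1)).exists_forall_of_atTop
  have hbound : ∀ N ≥ N₀, ∏ n ∈ Finset.range N, a n ≤ r ^ N := by
    intro N hN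
    obtain ⟨h1, h2⟩ := hN₀ N hN
    have hNpos : (0:ℝ) < N := by exact_mod_cast h2
    have hS : (∑ k ∈ Finset.range N, X k) < m/2 * N := by
      rwa [div_lt_iff₀ hNpos] at h1
    have hPle : ∏ n ∈ Finset.range N, a n ≤ Real.exp (∑ k ∈ Finset.range N, X k) := by
      rw [Real.exp_sum]
      refine Finset.prod_le_prod (fun n _ => (ha n).le) fun n _ => ?_
      rw [← Real.exp_log (ha n)]
      exact Real.exp_le_exp.mpr (le_max_left _ _)
    calc ∏ n ∈ Finset.range N, a n ≤ Real.exp (∑ k ∈ Finset.range N, X k) := hPle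
      _ ≤ Real.exp (m/2 * N) := Real.exp_le_exp.mpr hS.le
      _ = r ^ N := by rw [hr, ← Real.exp_nat_mul, mul_comm]
  constructor
  · refine (summable_nat_add_iff N₀).mp ?_
    refine Summable.of_nonneg_of_le (fun j => Finset.prod_nonneg fun n _ => (ha n).le)
      (fun j => ?_) ((summable_geometric_of_lt_one hr0.le hr1).mul_right (r ^ (N₀+1)))
    calc ∏ n ∈ Finset.range (j + N₀ + 1), a n ≤ r ^ (j + N₀ + 1) := hbound _ (by omega)
      _ = r ^ j * r ^ (N₀ + 1) := by ring
  · refine squeeze_zero' (Eventually.of_forall fun N => Finset.prod_nonneg fun n _ => (ha n).le)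
      (eventually_atTop.mpr ⟨N₀, hbound⟩)
      (tendsto_pow_atTop_nhds_zero_of_lt_one hr0.le hr1)

private lemma chooseTrunc {Ω : Type*} [MeasurableSpace Ω] (μ : Measure Ω)
    [IsProbabilityMeasure μ]
    (g : Ω → ℝ) (hg : Measurable g)
    (hplus : Integrable (fun ω => max (g ω) 0) μ)
    (hneg : ∫⁻ ω, ENNReal.ofReal (max (g ω) 0) ∂μ
          < ∫⁻ ω, ENNReal.ofReal (max (-g ω) 0) ∂μ) :
    ∃ C : ℕ, Integrable (fun ω => max (g ω) (-(C:ℝ))) μ ∧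
      ∫ ω, max (g ω) (-(C:ℝ)) ∂μ < 0 := by
  have hnegmeas : Measurable (fun ω => max (-g ω) 0) := (hg.neg.max measurable_const)
  have hsup : ∫⁻ ω, ENNReal.ofReal (max (-g ω) 0) ∂μ
      = ⨆ C : ℕ, ∫⁻ ω, ENNReal.ofReal (min (max (-g ω) 0) C) ∂μ := by
    rw [← lintegral_iSup]
    · refine lintegral_congr fun ω => ?_
      refine (le_antisymm (iSup_le fun k => ENNReal.ofReal_le_ofReal (min_le_left _ _)) ?_).symm
      refine le_iSup_of_le ⌈max (-g ω) 0⌉₊ ?_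
      rw [min_eq_left (Nat.le_ceil _)]
    · exact fun C => ENNReal.measurable_ofReal.comp (hnegmeas.min measurable_const)
    · intro C C' hCC' ω
      exact ENNReal.ofReal_le_ofReal (min_le_min le_rfl (by exact_mod_cast hCC'))
  rw [hsup] at hneg
  obtain ⟨C, hC⟩ := lt_iSup_iff.mp hneg
  have htruncmeas : Measurable (fun ω => min (max (-g ω) 0) (C:ℝ)) :=
    hnegmeas.min measurable_const
  have htrunc : Integrable (fun ω => min (max (-g ω) 0) (C:ℝ)) μ := by
    refine Integrable.mono' (integrable_const (C:ℝ)) htruncmeas.aestronglyMeasurable ?_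
    refine Eventually.of_forall fun ω => ?_
    rw [Real.norm_eq_abs, abs_of_nonneg (le_min (le_max_right _ _) (by positivity))]
    exact min_le_right _ _
  have hYeq : (fun ω => max (g ω) (-(C:ℝ)))
      = fun ω => max (g ω) 0 - min (max (-g ω) 0) (C:ℝ) := by
    funext ω
    set x := g ω with hx
    rcases le_total 0 x with h | h
    · rw [max_eq_left ((neg_nonpos.mpr (by positivity : (0:ℝ) ≤ (C:ℝ))).trans h), max_eq_left h,
        max_eq_right (neg_nonpos.mpr h), min_eq_left (by positivity)]
      ring
    · rw [max_eq_right h, max_eq_left (neg_nonneg.mpr h), show x = -(-x) by ring, max_neg_neg]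
      ring
  have hposint : ∫ ω, max (g ω) 0 ∂μ
      = (∫⁻ ω, ENNReal.ofReal (max (g ω) 0) ∂μ).toReal :=
    integral_eq_lintegral_of_nonneg_ae (Eventually.of_forall fun ω => le_max_right _ _)
      (hg.max measurable_const).aestronglyMeasurable
  have htruncint : ∫ ω, min (max (-g ω) 0) (C:ℝ) ∂μ
      = (∫⁻ ω, ENNReal.ofReal (min (max (-g ω) 0) (C:ℝ)) ∂μ).toReal :=
    integral_eq_lintegral_of_nonneg_ae
      (Eventually.of_forall fun ω => le_min (le_max_right _ _) (by positivity))
      htruncmeas.aestronglyMeasurable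
  have hRtop : ∫⁻ ω, ENNReal.ofReal (min (max (-g ω) 0) (C:ℝ)) ∂μ ≠ ⊤ := by
    refine ne_top_of_le_ne_top ?_ (lintegral_mono fun ω =>
      ENNReal.ofReal_le_ofReal (min_le_right _ _))
    rw [lintegral_const, measure_univ, mul_one]
    exact ENNReal.ofReal_ne_top
  refine ⟨C, ?_, ?_⟩
  · rw [hYeq]; exact hplus.sub htrunc
  · rw [hYeq]
    rw [integral_sub hplus htrunc, sub_neg, hposint, htruncint]
    exact (ENNReal.toReal_lt_toReal (ne_top_of_lt hC) hRtop).mpr hC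

/-- The partial products `∏_{n<N} (α ε_{i-1-n}² + β)` appearing in the GARCH series. -/
private def garchP {Ω : Type*} (ε : ℤ → Ω → ℝ) (α β : ℝ) (i : ℤ) (N : ℕ) (ω : Ω) : ℝ :=
  ∏ n ∈ Finset.range N, (α * (ε (i - 1 - n) ω) ^ 2 + β)

/-- Nelson's strict stationarity criterion for GARCH(1,1): if `(ε_i)_{i∈ℤ}` are i.i.d.,
`α, β > 0`, `E(log(α ε₀² + β))⁺ < ∞` and `E log(α ε₀² + β) < 0` (expressed as: the positive
part is integrable and its lintegral is strictly smaller than that of the negative part),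
then the random series `H_i = w (1 + Σ_{j≥1} Π_{k=1}^j (α ε_{i-k}² + β))` converges a.s.
for every `w > 0`, satisfies the recursion `H_i = w + (α ε_{i-1}² + β) H_{i-1}` a.s., and is
the unique (measurable, shift-stationary) solution of this recursion. -/
theorem stmt_11 {Ω : Type*} [MeasurableSpace Ω] (μ : Measure Ω) [IsProbabilityMeasure μ]
    (ε : ℤ → Ω → ℝ) (hmeas : ∀ i, Measurable (ε i))
    (hindep : iIndepFun ε μ)
    (hident : ∀ i, IdentDistrib (ε i) (ε 0) μ μ)
    (α β : ℝ) (hα : 0 < α) (hβ : 0 < β)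
    (hplus : Integrable (fun ω => max (Real.log (α * (ε 0 ω) ^ 2 + β)) 0) μ)
    (hneg : ∫⁻ ω, ENNReal.ofReal (max (Real.log (α * (ε 0 ω) ^ 2 + β)) 0) ∂μ
          < ∫⁻ ω, ENNReal.ofReal (max (-Real.log (α * (ε 0 ω) ^ 2 + β)) 0) ∂μ)
    (w : ℝ) (hw : 0 < w)
    (H : ℤ → Ω → ℝ)
    (hH : ∀ i ω, H i ω
        = w * (1 + ∑' j : ℕ, ∏ k ∈ Finset.Icc 1 (j + 1), (α * (ε (i - k) ω) ^ 2 + β))) :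
    (∀ᵐ ω ∂μ, ∀ i : ℤ,
      Summable (fun j : ℕ => ∏ k ∈ Finset.Icc 1 (j + 1), (α * (ε (i - k) ω) ^ 2 + β))) ∧
    (∀ᵐ ω ∂μ, ∀ i : ℤ, H i ω = w + (α * (ε (i - 1) ω) ^ 2 + β) * H (i - 1) ω) ∧
    (∀ G : ℤ → Ω → ℝ, (∀ i, Measurable (G i)) →
      (∀ᵐ ω ∂μ, ∀ i : ℤ, G i ω = w + (α * (ε (i - 1) ω) ^ 2 + β) * G (i - 1) ω) →
      Measure.map (fun ω => fun n : ℤ => G (n + 1) ω) μ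
        = Measure.map (fun ω => fun n : ℤ => G n ω) μ →
      ∀ i, G i =ᵐ[μ] H i) := by
  -- positivity of the random coefficients
  have hapos : ∀ (m : ℤ) (ω : Ω), 0 < α * (ε m ω) ^ 2 + β := fun m ω => by positivity
  -- the product over `Icc 1 (j+1)` is `garchP`
  have hprod : ∀ (i : ℤ) (j : ℕ) (ω : Ω),
      ∏ k ∈ Finset.Icc 1 (j + 1), (α * (ε (i - k) ω) ^ 2 + β) = garchP ε α β i (j+1) ω := by
    intro i j ω
    rw [prodIccRange (fun k : ℕ => α * (ε (i - k) ω) ^ 2 + β) (j+1)]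
    refine Finset.prod_congr rfl fun n _ => ?_
    have : (i - (n+1 : ℕ) : ℤ) = i - 1 - n := by push_cast; ring
    rw [this]
  have hHP : ∀ (i : ℤ) (ω : Ω), H i ω = w * (1 + ∑' j : ℕ, garchP ε α β i (j+1) ω) := by
    intro i ω
    rw [hH i ω]
    congr 2
    exact tsum_congr fun j => hprod i j ω
  -- choose a truncation level
  obtain ⟨C, hYint, hYneg⟩ := chooseTrunc μ (fun ω => Real.log (α * (ε 0 ω) ^ 2 + β))
    ((Real.measurable_log.comp (((hmeas 0).pow_const 2).const_mul α |>.add_const β)))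
    hplus hneg
  set m : ℝ := ∫ ω, max (Real.log (α * (ε 0 ω) ^ 2 + β)) (-(C:ℝ)) ∂μ with hm
  -- the truncated log function
  set φ : ℝ → ℝ := fun x => max (Real.log (α * x ^ 2 + β)) (-(C:ℝ)) with hφdef
  have hφm : Measurable φ :=
    (Real.measurable_log.comp ((measurable_id.pow_const 2).const_mul α |>.add_const β)).max
      measurable_const
  -- strong law of large numbers for each starting index i
  have hslln : ∀ i : ℤ, ∀ᵐ ω ∂μ,
      Tendsto (fun n : ℕ => (∑ k ∈ Finset.range n, φ (ε (i - 1 - k) ω)) / n)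
        atTop (𝓝 m) := by
    intro i
    have key := strong_law_ae_real (μ := μ) (fun n : ℕ => φ ∘ ε (i - 1 - n))
      (((hident (i-1-(0:ℕ))).comp hφm).integrable_iff.mpr hYint)
      (fun n k hnk => (hindep.indepFun (by omega : (i-1-(n:ℕ):ℤ) ≠ (i-1-(k:ℕ)))).comp hφm hφm)
      (fun n => ((hident (i-1-n)).trans (hident (i-1-(0:ℕ))).symm).comp hφm)
    have hint0 : ∫ ω, (φ ∘ ε (i-1-(0:ℕ))) ω ∂μ = m :=
      ((hident (i-1-(0:ℕ))).comp hφm).integral_eq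
    rw [hint0] at key
    exact key
  -- the good event: summability and convergence of the products to 0, for every i
  have hE : ∀ᵐ ω ∂μ, ∀ i : ℤ, Summable (fun j : ℕ => garchP ε α β i (j+1) ω) ∧
      Tendsto (fun N : ℕ => garchP ε α β i N ω) atTop (𝓝 0) := by
    rw [ae_all_iff]
    intro i
    filter_upwards [hslln i] with ω hω
    exact conv_of_slln (fun n : ℕ => α * (ε (i - 1 - n) ω) ^ 2 + β)
      (fun n => hapos _ ω) (C:ℝ) m hYneg hω
  -- the one-step relation between consecutive products
  have hstep : ∀ (i : ℤ) (j : ℕ) (ω : Ω),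
      garchP ε α β i (j+2) ω = garchP ε α β (i-1) (j+1) ω * (α * (ε (i - 1) ω) ^ 2 + β) := by
    intro i j ω
    show (∏ n ∈ Finset.range (j+2), (α * (ε (i - 1 - n) ω) ^ 2 + β)) = _
    rw [Finset.prod_range_succ']
    congr 1
    · refine Finset.prod_congr rfl fun n _ => ?_
      have : (i - 1 - (n+1 : ℕ) : ℤ) = i - 1 - 1 - n := by push_cast; ring
      rw [this]
    · norm_num
  -- the a.e. recursion for H
  have hHrec : ∀ᵐ ω ∂μ, ∀ i : ℤ, H i ω = w + (α * (ε (i - 1) ω) ^ 2 + β) * H (i - 1) ω := by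
    filter_upwards [hE] with ω hω
    intro i
    rw [hHP i ω, hHP (i-1) ω]
    have hsum := (hω i).1
    rw [hsum.tsum_eq_zero_add]
    have h1 : garchP ε α β i 1 ω = α * (ε (i - 1) ω) ^ 2 + β := by
      show (∏ n ∈ Finset.range 1, (α * (ε (i - 1 - n) ω) ^ 2 + β)) = _
      norm_num
    have h2 : ∑' j : ℕ, garchP ε α β i (j+1+1) ω
        = (∑' j : ℕ, garchP ε α β (i-1) (j+1) ω) * (α * (ε (i - 1) ω) ^ 2 + β) := by
      rw [← tsum_mul_right]
      exact tsum_congr fun j => hstep i j ω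
    rw [h1, h2]
    ring
  refine ⟨?_, hHrec, ?_⟩
  · filter_upwards [hE] with ω hω i
    exact ((hω i).1).congr fun j => (hprod i j ω).symm
  · intro G hG hGrec hGstat i
    -- all G n have the same distribution
    have hΦm : Measurable (fun ω => fun n : ℤ => G n ω) := measurable_pi_lambda _ hG
    have hΦ'm : Measurable (fun ω => fun n : ℤ => G (n+1) ω) :=
      measurable_pi_lambda _ (fun n => hG (n+1))
    have hstep1 : ∀ n : ℤ, Measure.map (G (n+1)) μ = Measure.map (G n) μ := by
      intro n
      have h1 := congrArg (Measure.map (fun f : ℤ → ℝ => f n)) hGstat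
      rwa [Measure.map_map (measurable_pi_apply n) hΦ'm,
        Measure.map_map (measurable_pi_apply n) hΦm] at h1
    have hmap : ∀ n : ℤ, Measure.map (G n) μ = Measure.map (G 0) μ := by
      intro n
      induction n using Int.induction_on with
      | zero => rfl
      | succ k ih => rw [← ih]; exact hstep1 k
      | pred k ih =>
        have h := hstep1 (-(k:ℤ)-1)
        rw [show (-(k:ℤ)-1+1) = -(k:ℤ) by ring] at h
        rw [← h, ih]
    have hmapset : ∀ (n : ℤ) (t : ℝ), μ {ω | t ≤ |G n ω|} = μ {ω | t ≤ |G 0 ω|} := by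
      intro n t
      have hs : MeasurableSet {x : ℝ | t ≤ |x|} :=
        (isClosed_le continuous_const continuous_abs).measurableSet
      have h1 : μ {ω | t ≤ |G n ω|} = Measure.map (G n) μ {x | t ≤ |x|} := by
        rw [Measure.map_apply (hG n) hs]; rfl
      have h2 : μ {ω | t ≤ |G 0 ω|} = Measure.map (G 0) μ {x | t ≤ |x|} := by
        rw [Measure.map_apply (hG 0) hs]; rfl
      rw [h1, h2, hmap n]
    -- tightness of the fixed distribution
    have htight : Tendsto (fun k : ℕ => μ {ω | (k:ℝ) ≤ |G 0 ω|}) atTop (𝓝 0) := by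
      have h0 : (⋂ k : ℕ, {ω | (k:ℝ) ≤ |G 0 ω|}) = ∅ := by
        ext ω
        simp only [Set.mem_iInter, Set.mem_setOf_eq, Set.mem_empty_iff_false, iff_false,
          not_forall, not_le]
        obtain ⟨k, hk⟩ := exists_nat_gt |G 0 ω|
        exact ⟨k, hk⟩
      have h1 := tendsto_measure_iInter_atTop (μ := μ)
        (s := fun k : ℕ => {ω | (k:ℝ) ≤ |G 0 ω|})
        (fun k => ((measurableSet_le measurable_const (hG 0).abs)).nullMeasurableSet)
        (fun k k' hkk' ω hω => le_trans ((Nat.cast_le (α := ℝ)).mpr hkk') hω)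
        ⟨0, measure_ne_top μ _⟩
      rw [h0, measure_empty] at h1
      exact h1
    -- the iterated recursion for G
    have hiter : ∀ᵐ ω ∂μ, ∀ (N : ℕ),
        G i ω = w * ∑ j ∈ Finset.range (N+1), garchP ε α β i j ω
          + garchP ε α β i (N+1) ω * G (i - (N+1:ℕ)) ω := by
      filter_upwards [hGrec] with ω hω
      intro N
      induction N with
      | zero =>
        have hP0 : garchP ε α β i 0 ω = 1 := Finset.prod_range_zero _
        have hP1 : garchP ε α β i 1 ω = α * (ε (i - 1) ω) ^ 2 + β := by
          show ∏ n ∈ Finset.range 1, (α * (ε (i - 1 - n) ω) ^ 2 + β) = _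
          norm_num
        rw [Finset.sum_range_one, hP0, hP1, mul_one,
          show (i - ((0:ℕ)+1 : ℕ) : ℤ) = i - 1 by norm_num]
        exact hω i
      | succ N ih =>
        rw [ih, hω (i - (N+1:ℕ))]
        have hPsucc : garchP ε α β i (N+2) ω
            = garchP ε α β i (N+1) ω * (α * (ε (i - 1 - (N+1:ℕ)) ω) ^ 2 + β) :=
          Finset.prod_range_succ _ _
        have he1 : (i - (N+1:ℕ) - 1 : ℤ) = i - 1 - (N+1:ℕ) := by push_cast; ring
        have he2 : (i - (N+1:ℕ) - 1 : ℤ) = i - (N+1+1:ℕ) := by push_cast; ring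
        have hsum : ∑ j ∈ Finset.range (N+1+1), garchP ε α β i j ω
            = ∑ j ∈ Finset.range (N+1), garchP ε α β i j ω + garchP ε α β i (N+1) ω :=
          Finset.sum_range_succ _ _
        rw [hsum, show (N+1+1) = N+2 from rfl, hPsucc, ← he2, he1]
        ring
    -- the remainder converges a.e. to G i - H i
    have hGood : ∀ᵐ ω ∂μ,
        Tendsto (fun N : ℕ => garchP ε α β i (N+1) ω * G (i - (N+1:ℕ)) ω)
          atTop (𝓝 (G i ω - H i ω)) := by
      filter_upwards [hE, hiter] with ω hω hit
      have hsum1 : Summable (fun j : ℕ => garchP ε α β i (j+1) ω) := (hω i).1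
      have hsum0 : Summable (fun j : ℕ => garchP ε α β i j ω) :=
        (summable_nat_add_iff 1).mp hsum1
      have hts : Tendsto (fun N : ℕ => ∑ j ∈ Finset.range N, garchP ε α β i j ω) atTop
          (𝓝 (∑' j : ℕ, garchP ε α β i j ω)) := hsum0.hasSum.tendsto_sum_nat
      have htsum : w * (∑' j : ℕ, garchP ε α β i j ω) = H i ω := by
        rw [hHP i ω, hsum0.tsum_eq_zero_add]
        have h00 : garchP ε α β i 0 ω = 1 := Finset.prod_range_zero _
        rw [h00]
      have h2 : Tendsto (fun N : ℕ => G i ω - w * ∑ j ∈ Finset.range (N+1), garchP ε α β i j ω)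
          atTop (𝓝 (G i ω - H i ω)) := by
        rw [← htsum]
        exact tendsto_const_nhds.sub ((hts.comp (tendsto_add_atTop_nat 1)).const_mul w)
      refine h2.congr fun N => ?_
      have := hit N
      linarith
    -- the remainder converges to 0 in probability
    have hProb : ∀ δ : ℝ, 0 < δ → Tendsto (fun N : ℕ =>
        μ {ω | δ ≤ |garchP ε α β i (N+1) ω * G (i - (N+1:ℕ)) ω|}) atTop (𝓝 0) := by
      intro δ hδ
      rw [ENNReal.tendsto_nhds_zero]
      intro e he
      have hhalf : (0:ENNReal) < e/2 := ENNReal.half_pos he.ne'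
      obtain ⟨k₁, hk₁⟩ :=
        (ENNReal.tendsto_nhds_zero.mp htight (e/2) hhalf).exists_forall_of_atTop
      set k₀ : ℕ := k₁ + 1 with hk₀
      have hk₀pos : (0:ℝ) < (k₀:ℝ) := by positivity
      set t : ℝ := δ / (k₀:ℝ) with ht
      have htpos : 0 < t := div_pos hδ hk₀pos
      have hPmeas : ∀ N : ℕ, Measurable (fun ω => garchP ε α β i (N+1) ω) := fun N =>
        Finset.measurable_prod _ (fun n _ =>
          (((hmeas _).pow_const 2).const_mul α).add_const β)
      have hPtend_ae : ∀ᵐ ω ∂μ, Tendsto (fun N : ℕ => garchP ε α β i (N+1) ω) atTop (𝓝 0) := by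
        filter_upwards [hE] with ω hω
        exact (hω i).2.comp (tendsto_add_atTop_nat 1)
      have hTIM : TendstoInMeasure μ (fun N ω => garchP ε α β i (N+1) ω) atTop
          (fun _ => (0:ℝ)) :=
        tendstoInMeasure_of_tendsto_ae (fun N => (hPmeas N).aestronglyMeasurable) hPtend_ae
      have hPev : ∀ᶠ N in atTop,
          μ {x | t ≤ dist (garchP ε α β i (N+1) x) 0} ≤ e/2 :=
        ENNReal.tendsto_nhds_zero.mp (tendstoInMeasure_iff_dist.mp hTIM t htpos) (e/2) hhalf
      filter_upwards [hPev] with N hN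
      have hsub : {ω | δ ≤ |garchP ε α β i (N+1) ω * G (i - (N+1:ℕ)) ω|}
          ⊆ {x | t ≤ dist (garchP ε α β i (N+1) x) 0}
            ∪ {ω | (k₀:ℝ) ≤ |G (i - (N+1:ℕ)) ω|} := by
        intro ω hω
        by_contra hc
        simp only [Set.mem_union, Set.mem_setOf_eq, not_or, not_le] at hc
        obtain ⟨h1, h2⟩ := hc
        have hPnn : 0 ≤ garchP ε α β i (N+1) ω :=
          Finset.prod_nonneg fun n _ => (hapos _ ω).le
        rw [Real.dist_eq, sub_zero, abs_of_nonneg hPnn] at h1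
        have habs : |garchP ε α β i (N+1) ω * G (i - (N+1:ℕ)) ω|
            = garchP ε α β i (N+1) ω * |G (i - (N+1:ℕ)) ω| := by
          rw [abs_mul, abs_of_nonneg hPnn]
        have hlt : garchP ε α β i (N+1) ω * |G (i - (N+1:ℕ)) ω| < t * k₀ :=
          mul_lt_mul'' h1 h2 hPnn (abs_nonneg _)
        rw [ht, div_mul_cancel₀ _ hk₀pos.ne'] at hlt
        rw [Set.mem_setOf_eq, habs] at hω
        linarith
      calc μ {ω | δ ≤ |garchP ε α β i (N+1) ω * G (i - (N+1:ℕ)) ω|}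
          ≤ μ ({x | t ≤ dist (garchP ε α β i (N+1) x) 0}
            ∪ {ω | (k₀:ℝ) ≤ |G (i - (N+1:ℕ)) ω|}) := measure_mono hsub
        _ ≤ μ {x | t ≤ dist (garchP ε α β i (N+1) x) 0}
            + μ {ω | (k₀:ℝ) ≤ |G (i - (N+1:ℕ)) ω|} := measure_union_le _ _
        _ ≤ e/2 + e/2 := by
            refine add_le_add hN ?_
            rw [hmapset]
            exact hk₁ k₀ (by omega)
        _ = e := ENNReal.add_halves e
    -- combine a.s. convergence and convergence in probability
    have hzero : ∀ δ : ℝ, 0 < δ → μ {ω | δ ≤ |G i ω - H i ω|} = 0 := by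
      intro δ hδ
      have hAtend := hProb (δ/2) (by linarith)
      have hBad : μ (⋃ M : ℕ, ⋂ N ∈ Set.Ici M,
          {ω | δ/2 ≤ |garchP ε α β i (N+1) ω * G (i - (N+1:ℕ)) ω|}) = 0 := by
        refine measure_iUnion_null fun M => ?_
        refine le_antisymm ?_ zero_le
        refine ge_of_tendsto hAtend (eventually_atTop.mpr ⟨M, fun N hN => ?_⟩)
        exact measure_mono (Set.biInter_subset_of_mem hN)
      set T : Set Ω := {ω | ¬ Tendsto
          (fun N : ℕ => garchP ε α β i (N+1) ω * G (i - (N+1:ℕ)) ω)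
          atTop (𝓝 (G i ω - H i ω))} with hT
      have hTnull : μ T = 0 := ae_iff.mp hGood
      refine measure_mono_null ?_ (measure_union_null hBad hTnull)
      intro ω hω
      rcases em (ω ∈ T) with h | h
      · exact Set.mem_union_right _ h
      · left
        rw [hT, Set.mem_setOf_eq, not_not] at h
        have habs : Tendsto (fun N : ℕ => |garchP ε α β i (N+1) ω * G (i - (N+1:ℕ)) ω|)
            atTop (𝓝 (|G i ω - H i ω|)) := h.abs
        have hev : ∀ᶠ N in atTop,
            δ/2 < |garchP ε α β i (N+1) ω * G (i - (N+1:ℕ)) ω| :=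
          habs.eventually (eventually_gt_nhds (lt_of_lt_of_le (by linarith) hω))
        obtain ⟨M, hM⟩ := hev.exists_forall_of_atTop
        exact Set.mem_iUnion.mpr ⟨M, Set.mem_biInter fun N hN => (hM N hN).le⟩
    have hfinal : μ {ω | G i ω ≠ H i ω} = 0 := by
      refine measure_mono_null ?_
        (measure_iUnion_null fun n : ℕ =>
          hzero (1/((n:ℝ)+1)) (by positivity))
      intro ω hω
      have hpos : 0 < |G i ω - H i ω| := abs_pos.mpr (sub_ne_zero.mpr hω)
      obtain ⟨n, hn⟩ := exists_nat_one_div_lt hpos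
      exact Set.mem_iUnion.mpr ⟨n, hn.le⟩
    exact ae_iff.mpr hfinal
end

section
/- Let (ε_i)_{i∈ℤ} be i.i.d. and α, β > 0 with 0 < E log(α ε₀² + β) < ∞. Then for the recursion σ²_i = ω + (α ε²_{i-1} + β) σ²_{i-1} with ω > 0 and σ²_0 ≥ 0, one has σ²_i → ∞ almost surely, in fact exponentially fast: liminf_{i→∞} (1/i) log σ²_i ≥ E log(α ε₀² + β) > 0 a.s. -/
open MeasureTheory ProbabilityTheory Filter Topology

/-- Explosive regime of GARCH(1,1): if `(ε_i)` are i.i.d. with `0 < E log(α ε₀² + β) < ∞`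
(the log is integrable with strictly positive mean), `α, β, ω > 0`, then the recursion
`σ²_{i+1} = ω + (α ε_i² + β) σ²_i` (nonnegative initial value) diverges a.s. to `∞`,
exponentially fast: `liminf (1/i) log σ²_i ≥ E log(α ε₀² + β) > 0` a.s. -/
theorem stmt_12 {Ω : Type*} [MeasurableSpace Ω] (μ : Measure Ω) [IsProbabilityMeasure μ]
    (ε : ℕ → Ω → ℝ) (hmeas : ∀ i, Measurable (ε i))
    (hindep : iIndepFun ε μ)
    (hident : ∀ i, IdentDistrib (ε i) (ε 0) μ μ)
    (α β w : ℝ) (hα : 0 < α) (hβ : 0 < β) (hw : 0 < w)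
    (hint : Integrable (fun ω => Real.log (α * (ε 0 ω) ^ 2 + β)) μ)
    (hpos : 0 < ∫ ω, Real.log (α * (ε 0 ω) ^ 2 + β) ∂μ)
    (s : ℕ → Ω → ℝ) (hs0 : ∀ ω, 0 ≤ s 0 ω)
    (hrec : ∀ i ω, s (i + 1) ω = w + (α * (ε i ω) ^ 2 + β) * s i ω) :
    ∀ᵐ ω ∂μ,
      Tendsto (fun i : ℕ => s i ω) atTop atTop ∧
      (∫ a, Real.log (α * (ε 0 a) ^ 2 + β) ∂μ)
        ≤ Filter.liminf (fun i : ℕ => Real.log (s i ω) / i) atTop := by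
  set m : ℝ := ∫ a, Real.log (α * (ε 0 a) ^ 2 + β) ∂μ with hm
  have mf : Measurable fun x : ℝ => Real.log (α * x ^ 2 + β) := by
    apply Real.measurable_log.comp
    exact ((measurable_id.pow_const 2).const_mul α).add_const β
  set Y : ℕ → Ω → ℝ := fun i ω => Real.log (α * (ε i ω) ^ 2 + β) with hYdef
  have hYindep : Pairwise (Function.onFun (IndepFun · · μ) Y) := fun i j hij =>
    (hindep.indepFun hij).comp mf mf
  have hYident : ∀ i, IdentDistrib (Y i) (Y 0) μ μ := fun i => (hident i).comp mf
  have hslln := strong_law_ae_real Y hint hYindep hYident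
  filter_upwards [hslln] with ω hω
  set A : ℕ → ℝ := fun k => α * (ε k ω) ^ 2 + β with hAdef
  have hApos : ∀ k, 0 < A k := fun k => by
    have : 0 ≤ α * (ε k ω) ^ 2 := by positivity
    simp only [hAdef]; linarith
  have hAβ : ∀ k, β ≤ A k := fun k => by
    have : 0 ≤ α * (ε k ω) ^ 2 := by positivity
    simp only [hAdef]; linarith
  have hYA : ∀ k, Y k ω = Real.log (A k) := fun k => rfl
  set S : ℕ → ℝ := fun n => ∑ k ∈ Finset.range n, Y k ω with hSdef
  have hωS : Tendsto (fun n : ℕ => S n / n) atTop (𝓝 m) := hω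
  -- lower bound by products
  have hlow : ∀ n, w * ∏ k ∈ Finset.Ico 1 (n + 1), A k ≤ s (n + 1) ω := by
    intro n
    induction n with
    | zero =>
      simp only [Finset.Ico_self, Finset.prod_empty, mul_one, hrec 0 ω]
      have h1 : 0 ≤ (α * ε 0 ω ^ 2 + β) * s 0 ω := mul_nonneg (by positivity) (hs0 ω)
      linarith
    | succ n ih =>
      rw [Finset.prod_Ico_succ_top (by omega : 1 ≤ n + 1), hrec (n + 1) ω]
      have h1 : 0 < A (n + 1) := hApos (n + 1)
      calc w * ((∏ k ∈ Finset.Ico 1 (n + 1), A k) * A (n + 1))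
          = A (n + 1) * (w * ∏ k ∈ Finset.Ico 1 (n + 1), A k) := by ring
        _ ≤ A (n + 1) * s (n + 1) ω := by
            exact mul_le_mul_of_nonneg_left ih h1.le
        _ ≤ w + A (n + 1) * s (n + 1) ω := by linarith
  have hprodpos : ∀ n, 0 < ∏ k ∈ Finset.Ico 1 (n + 1), A k := fun n =>
    Finset.prod_pos fun k _ => hApos k
  have hspos : ∀ n, 0 < s (n + 1) ω := fun n =>
    lt_of_lt_of_le (mul_pos hw (hprodpos n)) (hlow n)
  have hsnonneg : ∀ n, 0 ≤ s n ω := by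
    intro n
    cases n with
    | zero => exact hs0 ω
    | succ n => exact (hspos n).le
  -- logarithmic lower bound
  have hloglow : ∀ n, 1 ≤ n → Real.log w - Y 0 ω + S n ≤ Real.log (s n ω) := by
    intro n hn
    obtain ⟨j, rfl⟩ := Nat.exists_eq_add_of_le hn
    have h1 : Real.log (w * ∏ k ∈ Finset.Ico 1 (j + 1), A k) ≤ Real.log (s (j + 1) ω) := by
      apply Real.log_le_log (mul_pos hw (hprodpos j))
      simpa using hlow j
    rw [Real.log_mul hw.ne' (hprodpos j).ne',
      Real.log_prod (fun k _ => (hApos k).ne')] at h1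
    have h2 : ∑ k ∈ Finset.Ico 1 (j + 1), Real.log (A k) = S (j + 1) - S 1 := by
      simp only [hSdef]
      rw [Finset.sum_Ico_eq_sub _ (by omega : 1 ≤ j + 1)]
    have h3 : S 1 = Y 0 ω := by simp [hSdef]
    rw [h2, h3] at h1
    have : 1 + j = j + 1 := by omega
    rw [this]
    linarith
  -- logarithmic upper bound
  set c : ℝ := Real.log ((w + 1) / β + 1) with hcdef
  have hBpos : ∀ k, 0 < w + 1 + A k := fun k => by have := hApos k; linarith
  have hup : ∀ n, s n ω + 1 ≤ (s 0 ω + 1) * ∏ k ∈ Finset.range n, (w + 1 + A k) := by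
    intro n
    induction n with
    | zero => simp
    | succ n ih =>
      rw [Finset.prod_range_succ, hrec n ω]
      have h1 : 0 < w + 1 + A n := hBpos n
      have h2 : 0 ≤ s n ω := hsnonneg n
      have h3 : 0 < A n := hApos n
      calc w + A n * s n ω + 1 ≤ (s n ω + 1) * (w + 1 + A n) := by nlinarith
        _ ≤ ((s 0 ω + 1) * ∏ k ∈ Finset.range n, (w + 1 + A k)) * (w + 1 + A n) :=
            mul_le_mul_of_nonneg_right ih h1.le
        _ = (s 0 ω + 1) * ((∏ k ∈ Finset.range n, (w + 1 + A k)) * (w + 1 + A n)) := by ring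
  have hlogB : ∀ k, Real.log (w + 1 + A k) ≤ Y k ω + c := by
    intro k
    have hq : 0 < (w + 1) / β + 1 := by positivity
    have h1 : w + 1 + A k ≤ A k * ((w + 1) / β + 1) := by
      have h2 : β * ((w + 1) / β) = w + 1 := by field_simp
      have h3 : β * ((w + 1) / β) ≤ A k * ((w + 1) / β) := by
        apply mul_le_mul_of_nonneg_right (hAβ k)
        positivity
      nlinarith [hAβ k]
    have := Real.log_le_log (hBpos k) h1
    rwa [Real.log_mul (hApos k).ne' hq.ne'] at this
  have hupper : ∀ n, Real.log (s n ω) ≤ Real.log (s 0 ω + 1) + (S n + n * c) := by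
    intro n
    have hs1 : 0 < s n ω + 1 := by have := hsnonneg n; linarith
    have h0 : Real.log (s n ω) ≤ Real.log (s n ω + 1) := by
      rcases eq_or_lt_of_le (hsnonneg n) with h | h
      · rw [← h]; norm_num
      · exact Real.log_le_log h (by linarith)
    have hprod : 0 < ∏ k ∈ Finset.range n, (w + 1 + A k) :=
      Finset.prod_pos fun k _ => hBpos k
    have hs01 : 0 < s 0 ω + 1 := by have := hs0 ω; linarith
    have h1 : Real.log (s n ω + 1)
        ≤ Real.log ((s 0 ω + 1) * ∏ k ∈ Finset.range n, (w + 1 + A k)) :=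
      Real.log_le_log hs1 (hup n)
    rw [Real.log_mul hs01.ne' hprod.ne',
      Real.log_prod (fun k _ => (hBpos k).ne')] at h1
    have h2 : ∑ k ∈ Finset.range n, Real.log (w + 1 + A k) ≤ S n + n * c := by
      calc ∑ k ∈ Finset.range n, Real.log (w + 1 + A k)
          ≤ ∑ k ∈ Finset.range n, (Y k ω + c) := Finset.sum_le_sum fun k _ => hlogB k
        _ = S n + n * c := by
            rw [Finset.sum_add_distrib, Finset.sum_const, Finset.card_range, nsmul_eq_mul]
    linarith
  -- S tends to infinity
  have hStop : Tendsto S atTop atTop := by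
    have hev : ∀ᶠ n : ℕ in atTop, m / 2 * n ≤ S n := by
      have h1 : ∀ᶠ n : ℕ in atTop, m / 2 ≤ S n / n :=
        hωS.eventually (eventually_ge_nhds (by linarith : m / 2 < m))
      filter_upwards [h1, eventually_ge_atTop 1] with n hn1 hn2
      have hn : (0 : ℝ) < n := by exact_mod_cast hn2
      calc m / 2 * n ≤ S n / n * n := mul_le_mul_of_nonneg_right hn1 hn.le
        _ = S n := by field_simp
    exact tendsto_atTop_mono' atTop hev
      (Tendsto.const_mul_atTop (by linarith : (0:ℝ) < m / 2) tendsto_natCast_atTop_atTop)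
  constructor
  · -- s tends to infinity
    have hlogtop : Tendsto (fun n => Real.log (s n ω)) atTop atTop := by
      have hev : ∀ᶠ n : ℕ in atTop, Real.log w - Y 0 ω + S n ≤ Real.log (s n ω) := by
        filter_upwards [eventually_ge_atTop 1] with n hn
        exact hloglow n hn
      exact tendsto_atTop_mono' atTop hev (tendsto_atTop_add_const_left atTop _ hStop)
    have := Real.tendsto_exp_atTop.comp hlogtop
    apply this.congr'
    filter_upwards [eventually_ge_atTop 1] with n hn
    obtain ⟨j, rfl⟩ := Nat.exists_eq_add_of_le hn
    simp only [Function.comp]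
    rw [Real.exp_log (by simpa [Nat.add_comm] using hspos j)]
  · -- liminf bound
    set f : ℕ → ℝ := fun n => (Real.log w - Y 0 ω) / n + S n / n with hfdef
    have hf_tend : Tendsto f atTop (𝓝 m) := by
      have := (tendsto_const_div_atTop_nhds_zero_nat (Real.log w - Y 0 ω)).add hωS
      simpa using this
    have h_le : ∀ᶠ n : ℕ in atTop, f n ≤ Real.log (s n ω) / n := by
      filter_upwards [eventually_ge_atTop 1] with n hn
      have hnpos : (0 : ℝ) < n := by exact_mod_cast hn
      have h1 := hloglow n hn
      calc f n = (Real.log w - Y 0 ω + S n) / n := by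
            simp only [hfdef]; rw [add_div]
        _ ≤ Real.log (s n ω) / n := by
            exact div_le_div_of_nonneg_right h1 hnpos.le
    have hg_tend : Tendsto
        (fun n : ℕ => Real.log (s 0 ω + 1) / n + S n / n + c) atTop (𝓝 (0 + m + c)) :=
      ((tendsto_const_div_atTop_nhds_zero_nat (Real.log (s 0 ω + 1))).add hωS).add
        tendsto_const_nhds
    have hcob : IsCoboundedUnder (· ≥ ·) atTop (fun n : ℕ => Real.log (s n ω) / n) := by
      apply isCoboundedUnder_ge_of_eventually_le atTop (x := 0 + m + c + 1)
      have h2 : ∀ᶠ n : ℕ in atTop,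
          Real.log (s 0 ω + 1) / n + S n / n + c ≤ 0 + m + c + 1 :=
        hg_tend.eventually (eventually_le_nhds (lt_add_one _))
      filter_upwards [h2, eventually_ge_atTop 1] with n hn1 hn
      have hnpos : (0 : ℝ) < n := by exact_mod_cast hn
      have h1 := hupper n
      have h3 : Real.log (s n ω) / n ≤ (Real.log (s 0 ω + 1) + (S n + n * c)) / n :=
        div_le_div_of_nonneg_right h1 hnpos.le
      have h4 : (Real.log (s 0 ω + 1) + (S n + n * c)) / n
          = Real.log (s 0 ω + 1) / n + S n / n + c := by
        field_simp
        ring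
      linarith [h4 ▸ h3]
    calc m = liminf f atTop := hf_tend.liminf_eq.symm
      _ ≤ liminf (fun n : ℕ => Real.log (s n ω) / n) atTop :=
          liminf_le_liminf h_le hf_tend.isBoundedUnder_ge hcob
end
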